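/- Let A, B ∈ ℂ^{N×N} be Hermitian positive definite matrices and T > 0, σ² > 0. Define F = (2T/σ²) [Re(A ⊗ B), -Im(A ⊗ B); Im(A ⊗ B), Re(A ⊗ B)] ∈ ℝ^{2N²×2N²}. Then F is invertible and tr(F^{-1}) = (σ²/T) tr(A^{-1}) tr(B^{-1}). -/

import Mathlib

/-!
Identify `Z = X + iY ∈ ℂ^{n×n}` with the real matrix `[X, -Y; Y, X]`. This identification is
multiplicative and unital, so `F = c • realify (A ⊗ B)` with `c = 2T/σ²` is invertible with
inverse `c⁻¹ • realify (A⁻¹ ⊗ B⁻¹)`, and its trace is `2 c⁻¹ Re (tr A⁻¹ · tr B⁻¹)`. Both traces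
are real because `A⁻¹` and `B⁻¹` are Hermitian.
-/

open Matrix ComplexOrder
open scoped Kronecker

namespace Matrix

variable {n : Type*}

noncomputable def realify (M : Matrix n n ℂ) : Matrix (n ⊕ n) (n ⊕ n) ℝ :=
  fromBlocks (M.map Complex.re) (-(M.map Complex.im)) (M.map Complex.im) (M.map Complex.re)

lemma realify_one [DecidableEq n] : realify (1 : Matrix n n ℂ) = 1 := by
  ext (i | i) (j | j) <;> by_cases h : i = j <;> simp [realify, one_apply, h]

variable [Fintype n]

lemma realify_mul (M P : Matrix n n ℂ) : realify (M * P) = realify M * realify P := by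
  rw [realify, realify, realify, fromBlocks_multiply]
  ext (i | i) (j | j) <;>
    simp [mul_apply, Complex.mul_re, Complex.mul_im, Finset.sum_add_distrib,
      Finset.sum_sub_distrib] <;> ring

lemma trace_realify (M : Matrix n n ℂ) : trace (realify M) = 2 * (trace M).re := by
  simp only [realify, trace, diag, Fintype.sum_sum_type, fromBlocks_apply₁₁,
    fromBlocks_apply₂₂, map_apply, Complex.re_sum]
  ring

lemma realify_mul_nonsing_inv [DecidableEq n] {M : Matrix n n ℂ} (hM : IsUnit M.det) :
    realify M * realify M⁻¹ = 1 := by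
  rw [← realify_mul, mul_nonsing_inv M hM, realify_one]

lemma isUnit_realify [DecidableEq n] {M : Matrix n n ℂ} (hM : IsUnit M.det) :
    IsUnit (realify M) :=
  (isUnit_iff_isUnit_det _).mpr (isUnit_det_of_right_inverse (realify_mul_nonsing_inv hM))

lemma inv_realify [DecidableEq n] {M : Matrix n n ℂ} (hM : IsUnit M.det) :
    (realify M)⁻¹ = realify M⁻¹ :=
  inv_eq_right_inv (realify_mul_nonsing_inv hM)

lemma IsHermitian.im_trace_eq_zero {M : Matrix n n ℂ} (hM : M.IsHermitian) : M.trace.im = 0 := by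
  rw [← Complex.conj_eq_iff_im, ← Complex.star_def, ← trace_conjTranspose, hM.eq]

lemma PosDef.im_trace_inv_eq_zero [DecidableEq n] {M : Matrix n n ℂ} (hM : M.PosDef) :
    M⁻¹.trace.im = 0 :=
  hM.posSemidef.inv.isHermitian.im_trace_eq_zero

end Matrix

theorem stmt_5 {N : ℕ} (A B : Matrix (Fin N) (Fin N) ℂ)
    (hA : A.PosDef) (hB : B.PosDef) (T σsq : ℝ) (hT : 0 < T) (hσ : 0 < σsq) :
    let AB := A ⊗ₖ B
    let F : Matrix ((Fin N × Fin N) ⊕ (Fin N × Fin N))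
        ((Fin N × Fin N) ⊕ (Fin N × Fin N)) ℝ :=
      (2 * T / σsq) •
        Matrix.fromBlocks (AB.map Complex.re) (-(AB.map Complex.im))
          (AB.map Complex.im) (AB.map Complex.re)
    IsUnit F ∧
      Matrix.trace F⁻¹ = (σsq / T) * (Matrix.trace A⁻¹).re * (Matrix.trace B⁻¹).re := by
  intro AB F
  let c : ℝˣ := Units.mk0 (2 * T / σsq) (by positivity)
  have hF : F = c • realify AB := rfl
  have hAB : IsUnit AB.det := by
    rw [det_kronecker]
    exact (hA.isUnit.map detMonoidHom |>.pow _).mul (hB.isUnit.map detMonoidHom |>.pow _)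
  have hF_inv : F⁻¹ = c⁻¹ • realify (A⁻¹ ⊗ₖ B⁻¹) := by
    rw [hF, inv_smul' _ c ((isUnit_iff_isUnit_det _).mp (isUnit_realify hAB)), inv_realify hAB,
      inv_kronecker]
  refine ⟨hF ▸ (isUnit_smul_iff c _).mpr (isUnit_realify hAB), ?_⟩
  rw [hF_inv, trace_smul, trace_realify, trace_kronecker, Complex.mul_re,
    hA.im_trace_inv_eq_zero, hB.im_trace_inv_eq_zero, Units.smul_def, Units.val_inv_eq_inv_val,
    Units.val_mk0, smul_eq_mul]
  field_simp
  ring
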